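/- If X is a Tychonoff (completely regular Hausdorff) topological space such that the product space X × X is extremally disconnected, then X is discrete. -/

import Mathlib

/-!
Take a maximal open set `U` disjoint from its mirror image `σ U` under the coordinate swap `σ`.
Extremal disconnectedness makes the closures of `U` and `σ U` disjoint, so no point of the
diagonal lies in either closure. Conversely, an off-diagonal point outside both closures has, by
the Hausdorff property, a small neighbourhood disjoint from its mirror image, which could be added
to `U`. Hence the diagonal is the complement of `closure U ∪ closure (σ U)`, so it is open and `X`
is discrete.
-/

open Set Function

section

variable {Y : Type*} [TopologicalSpace Y]

theorem exists_maximal_isOpen_disjoint_preimage (f : Y → Y) :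
    ∃ U, Maximal (fun U : Set Y ↦ IsOpen U ∧ Disjoint U (f ⁻¹' U)) U := by
  refine zorn_subset _ fun c hc hchain ↦ ⟨⋃₀ c, ⟨isOpen_sUnion fun s hs ↦ (hc hs).1, ?_⟩,
    fun s hs ↦ subset_sUnion_of_mem hs⟩
  rw [preimage_sUnion, disjoint_sUnion_left]
  intro u hu
  refine disjoint_iUnion₂_right.mpr fun v hv ↦ ?_
  rcases hchain.total hu hv with huv | hvu
  · exact (hc hv).2.mono_left huv
  · exact (hc hu).2.mono_right (preimage_mono hvu)

theorem exists_isOpen_mem_disjoint_preimage [T2Space Y] {f : Y → Y} (hf : Continuous f) {x : Y}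
    (hx : f x ≠ x) : ∃ O, IsOpen O ∧ x ∈ O ∧ Disjoint O (f ⁻¹' O) := by
  obtain ⟨O₁, O₂, hO₁, hO₂, hxO₁, hfxO₂, hO₁₂⟩ := t2_separation hx.symm
  refine ⟨O₁ ∩ f ⁻¹' O₂, hO₁.inter (hO₂.preimage hf), ⟨hxO₁, hfxO₂⟩, ?_⟩
  exact disjoint_left.mpr fun p hp hfp ↦ disjoint_left.mp hO₁₂ hfp.1 hp.2

theorem isOpen_fixedPoints_of_involutive [T2Space Y] [ExtremallyDisconnected Y] {σ : Y → Y}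
    (hσ : Continuous σ) (hinv : Involutive σ) : IsOpen (fixedPoints σ) := by
  obtain ⟨U, ⟨hU, hUσ⟩, hUmax⟩ := exists_maximal_isOpen_disjoint_preimage σ
  set W := (closure (U ∪ σ ⁻¹' U))ᶜ
  have hWU : Disjoint W U := disjoint_compl_left.mono_right (subset_union_left.trans subset_closure)
  have hWσU : Disjoint W (σ ⁻¹' U) :=
    disjoint_compl_left.mono_right (subset_union_right.trans subset_closure)
  have hfix_W : fixedPoints σ ⊆ W := by
    intro z (hz : σ z = z)
    have hUσU : MapsTo σ U (σ ⁻¹' U) := fun p hp ↦ by simpa [mem_preimage, hinv p] using hp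
    have hcl := ExtremallyDisconnected.disjoint_closure_of_disjoint_isOpen hUσ hU
      (hU.preimage hσ)
    rw [mem_compl_iff, closure_union]
    rintro (hzU | hzσU)
    · exact disjoint_left.mp hcl hzU (hz ▸ map_mem_closure hσ hzU hUσU)
    · exact disjoint_left.mp hcl (hz ▸ map_mem_closure hσ hzσU (mapsTo_preimage σ U)) hzσU
  have hW_fix : W ⊆ fixedPoints σ := by
    intro w hw
    by_contra hne
    obtain ⟨O, hO, hwO, hOσ⟩ := exists_isOpen_mem_disjoint_preimage hσ hne
    have hdisj : Disjoint (U ∪ O ∩ W) (σ ⁻¹' (U ∪ O ∩ W)) := by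
      rw [preimage_union, disjoint_union_left, disjoint_union_right, disjoint_union_right]
      refine ⟨⟨hUσ, ?_⟩, hWσU.mono_left inter_subset_right,
        hOσ.mono inter_subset_left (preimage_mono inter_subset_left)⟩
      exact disjoint_left.mpr fun p hpU hp ↦
        disjoint_left.mp hWσU hp.2 (by simpa [mem_preimage, hinv p] using hpU)
    have hle := hUmax ⟨hU.union (hO.inter isClosed_closure.isOpen_compl), hdisj⟩
      subset_union_left
    exact disjoint_left.mp hWU hw (hle (Or.inr ⟨hwO, hw⟩))
  rw [hfix_W.antisymm hW_fix]
  exact isClosed_closure.isOpen_compl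

theorem discreteTopology_of_isOpen_diagonal (h : IsOpen (diagonal Y)) : DiscreteTopology Y := by
  refine discreteTopology_iff_isOpen_singleton.mpr fun x ↦ ?_
  have hx : {x} = (x, ·) ⁻¹' diagonal Y := by
    ext y
    simp [eq_comm]
  exact hx ▸ h.preimage (Continuous.prodMk_right x)

end

/-- If `X` is a Tychonoff (completely regular Hausdorff) space such that `X × X`
is extremally disconnected, then `X` is discrete. -/
theorem stmt1 {X : Type*} [TopologicalSpace X] [T35Space X]
    [ExtremallyDisconnected (X × X)] : DiscreteTopology X := by
  have hfix : fixedPoints (Prod.swap : X × X → X × X) = diagonal X := by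
    ext ⟨a, b⟩
    simp [IsFixedPt, eq_comm]
  apply discreteTopology_of_isOpen_diagonal
  rw [← hfix]
  exact isOpen_fixedPoints_of_involutive continuous_swap Prod.swap_swap
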